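/- arXiv:1903.07407 — 2 statements merged into one kernel-verified Lean document; each statement's English description precedes it below -/
import Mathlib

section
/- Let p, q ∈ (1,∞). Then the infinite product ∏_{n=1}^{∞} (1 − 1/(p·n·(q·n + 1 − q/p)))^{−1} converges and equals π_{p,q}/2. Equivalently, π_{p,q}/2 = lim_{N→∞} ∏_{n=1}^{N} [p·n·(q·n + 1 − q/p)] / [(p·n − 1)·(q·n + 1)]. -/
/-!
Substituting `t = x ^ (1/q)` turns `π_{p,q}/2 = ∫₀¹ (1 - t^q)^(-1/p) dt` into the Beta integral
`(1/q) B(1/q, 1 - 1/p)`. On the other hand, for `a, b > 0` the partial products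
`∏_{n=1}^N n(n+a+b-1)/((n+b-1)(n+a))` are, up to a factor tending to `1`, equal to
`a · Γ_N(a) Γ_N(b) / Γ_N(a+b)` with Euler's approximants `Γ_N = GammaSeq`, hence tend to
`a B(a, b)`.
With `a = 1/q` and `b = 1 - 1/p` the `n`-th factor is `pn(qn+1-q/p)/((pn-1)(qn+1))`.
-/

open Set MeasureTheory Filter

/-- Generalized arcsine: `arcsin_{p,q}(x) = ∫₀ˣ (1 - tᵠ)^(-1/p) dt`. -/
noncomputable def gArcsin (p q x : ℝ) : ℝ := ∫ t in (0:ℝ)..x, (1 - t ^ q) ^ (-(1 / p))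

/-- Generalized pi: `π_{p,q} = 2 ∫₀¹ (1 - tᵠ)^(-1/p) dt`. -/
noncomputable def gPi (p q : ℝ) : ℝ := 2 * gArcsin p q 1

/-- `S` is the generalized sine `sin_{p,q}` (the inverse of `gArcsin p q` on `[0,1]`). -/
def IsGSin (p q : ℝ) (S : ℝ → ℝ) : Prop :=
  ∀ y ∈ Icc (0:ℝ) 1, S (gArcsin p q y) = y

/-- `C` is the generalized cosine `cos_{p,q}`, the derivative of `S = sin_{p,q}`
on `[0, π_{p,q}/2]`. -/
def IsGCos (p q : ℝ) (S C : ℝ → ℝ) : Prop :=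
  ∀ x ∈ Icc (0:ℝ) (gPi p q / 2), HasDerivWithinAt S (C x) (Icc (0:ℝ) (gPi p q / 2)) x

open Real ProbabilityTheory Topology

theorem integral_rpow_mul_one_sub_rpow_eq_beta {α β : ℝ} (hα : 0 < α) (hβ : 0 < β) :
    ∫ x in (0:ℝ)..1, x ^ (α - 1) * (1 - x) ^ (β - 1) = beta α β := by
  have h : Complex.betaIntegral α β = ↑(∫ x in (0:ℝ)..1, x ^ (α - 1) * (1 - x) ^ (β - 1)) := by
    rw [Complex.betaIntegral, ← intervalIntegral.integral_ofReal]
    refine intervalIntegral.integral_congr fun x hx => ?_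
    rw [uIcc_of_le zero_le_one] at hx
    push_cast
    rw [Complex.ofReal_cpow hx.1, Complex.ofReal_cpow (sub_nonneg.2 hx.2)]
    push_cast
    rfl
  rw [beta_eq_betaIntegralReal α β hα hβ, h, Complex.ofReal_re]

theorem integral_comp_rpow_Ioo_zero_one {E : Type*} [NormedAddCommGroup E] [NormedSpace ℝ E]
    (g : ℝ → E) {p : ℝ} (hp : 0 < p) :
    ∫ x in Ioo 0 1, (p * x ^ (p - 1)) • g (x ^ p) = ∫ y in Ioo 0 1, g y := by
  have himage : (· ^ p) '' Ioo 0 1 = Ioo (0 : ℝ) 1 := by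
    ext y
    refine ⟨?_, fun hy => ⟨y ^ p⁻¹, ?_, ?_⟩⟩
    · rintro ⟨x, hx, rfl⟩
      exact ⟨rpow_pos_of_pos hx.1 p, rpow_lt_one hx.1.le hx.2 hp⟩
    · exact ⟨rpow_pos_of_pos hy.1 _, rpow_lt_one hy.1.le hy.2 (inv_pos.2 hp)⟩
    · simp [← rpow_mul hy.1.le, hp.ne']
  conv_rhs => rw [← himage]
  rw [integral_image_eq_integral_abs_deriv_smul measurableSet_Ioo
    (fun x hx ↦ (hasDerivAt_rpow_const (Or.inl hx.1.ne')).hasDerivWithinAt)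
    ((rpow_left_injOn hp.ne').mono fun x hx => hx.1.le)]
  refine setIntegral_congr_fun measurableSet_Ioo fun x hx => ?_
  rw [abs_of_pos (by have := hx.1; positivity)]

theorem gPi_div_two_eq_beta {p q : ℝ} (hp : 1 < p) (hq : 0 < q) :
    gPi p q / 2 = q⁻¹ * beta q⁻¹ (1 - p⁻¹) := by
  have hb : 0 < 1 - p⁻¹ := sub_pos.2 (inv_lt_one_of_one_lt₀ hp)
  rw [← integral_rpow_mul_one_sub_rpow_eq_beta (inv_pos.2 hq) hb,
    ← intervalIntegral.integral_const_mul, gPi, gArcsin, mul_div_cancel_left₀ _ two_ne_zero]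
  simp only [intervalIntegral.integral_of_le zero_le_one, integral_Ioc_eq_integral_Ioo]
  rw [← integral_comp_rpow_Ioo_zero_one _ (inv_pos.2 hq)]
  refine setIntegral_congr_fun measurableSet_Ioo fun x hx => ?_
  rw [← rpow_mul hx.1.le, inv_mul_cancel₀ hq.ne', rpow_one, smul_eq_mul, one_div,
    sub_sub_cancel_left, mul_assoc]

theorem prod_range_add_natCast_pos {x : ℝ} (hx : 0 < x) (N : ℕ) :
    0 < ∏ j ∈ Finset.range N, (x + j) :=
  Finset.prod_pos fun j _ => add_pos_of_pos_of_nonneg hx j.cast_nonneg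

noncomputable def betaFactor (a b x : ℝ) : ℝ :=
  x * (x + a + b - 1) / ((x + b - 1) * (x + a))

noncomputable def betaSeq (a b : ℝ) (N : ℕ) : ℝ :=
  N.factorial * (∏ j ∈ Finset.range (N + 1), (a + b + j))
    / ((∏ j ∈ Finset.range (N + 1), (a + j)) * ∏ j ∈ Finset.range (N + 1), (b + j))

section BetaProduct

variable {a b : ℝ} (ha : 0 < a) (hb : 0 < b)
include ha hb

theorem prod_Icc_betaFactor (N : ℕ) :
    ∏ n ∈ Finset.Icc 1 N, betaFactor a b n = a * betaSeq a b N * ((b + N) / (a + b + N)) := by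
  induction N with
  | zero =>
    simp only [Finset.Icc_eq_empty_of_lt zero_lt_one, Finset.prod_empty, betaSeq,
      Nat.factorial_zero, Nat.cast_one, zero_add, Finset.range_one, Finset.prod_singleton,
      CharP.cast_eq_zero, add_zero, one_mul]
    field_simp
  | succ N ih =>
    rw [Finset.prod_Icc_succ_top (Nat.le_add_left 1 N), ih, betaSeq, betaSeq,
      Finset.prod_range_succ _ (N + 1), Finset.prod_range_succ _ (N + 1),
      Finset.prod_range_succ _ (N + 1), Nat.factorial_succ, betaFactor]
    have := prod_range_add_natCast_pos (add_pos ha hb) (N + 1)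
    have := prod_range_add_natCast_pos ha (N + 1)
    have := prod_range_add_natCast_pos hb (N + 1)
    have : (0 : ℝ) < b + N := by positivity
    push_cast
    rw [show (N : ℝ) + 1 + b - 1 = b + N by ring]
    field_simp
    ring

theorem GammaSeq_mul_GammaSeq_div_GammaSeq {N : ℕ} (hN : N ≠ 0) :
    GammaSeq a N * GammaSeq b N / GammaSeq (a + b) N = betaSeq a b N := by
  have := prod_range_add_natCast_pos (add_pos ha hb) (N + 1)
  have := prod_range_add_natCast_pos ha (N + 1)
  have := prod_range_add_natCast_pos hb (N + 1)
  have hN' : (0 : ℝ) < N := by positivity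
  rw [GammaSeq, GammaSeq, GammaSeq, rpow_add hN', betaSeq]
  field_simp

theorem tendsto_prod_Icc_betaFactor :
    Tendsto (fun N : ℕ => ∏ n ∈ Finset.Icc 1 N, betaFactor a b n) atTop (𝓝 (a * beta a b)) := by
  have hGamma : Tendsto (fun N => GammaSeq a N * GammaSeq b N / GammaSeq (a + b) N) atTop
      (𝓝 (beta a b)) :=
    ((GammaSeq_tendsto_Gamma a).mul (GammaSeq_tendsto_Gamma b)).div (GammaSeq_tendsto_Gamma _)
      (Gamma_pos_of_pos (add_pos ha hb)).ne'
  have hone : Tendsto (fun N : ℕ => (b + N) / (a + b + N)) atTop (𝓝 1) := by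
    simpa using tendsto_add_mul_div_add_mul_atTop_nhds b (a + b) 1 one_ne_zero
  have hlim := ((tendsto_const_nhds (x := a)).mul hGamma).mul hone
  rw [mul_one] at hlim
  refine hlim.congr' ?_
  filter_upwards [eventually_ne_atTop 0] with N hN
  rw [prod_Icc_betaFactor ha hb, GammaSeq_mul_GammaSeq_div_GammaSeq ha hb hN]

end BetaProduct

theorem betaFactor_inv_one_sub_inv {p q : ℝ} (hp : p ≠ 0) (hq : q ≠ 0) (x : ℝ) :
    betaFactor q⁻¹ (1 - p⁻¹) x = p * x * (q * x + 1 - q / p) / ((p * x - 1) * (q * x + 1)) := by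
  rw [betaFactor, ← mul_div_mul_left _ _ (mul_ne_zero hp hq)]
  congr 1 <;> field_simp <;> ring

theorem inv_one_sub_one_div_eq {p q : ℝ} (hp : 1 < p) (hq : 0 < q) {x : ℝ} (hx : 1 ≤ x) :
    (1 - 1 / (p * x * (q * x + 1 - q / p)))⁻¹
      = p * x * (q * x + 1 - q / p) / ((p * x - 1) * (q * x + 1)) := by
  have hsub : p * x * (q * x + 1 - q / p) - 1 = (p * x - 1) * (q * x + 1) := by
    field_simp
    ring
  have hpos : 0 < (p * x - 1) * (q * x + 1) := by
    have : 1 < p * x := by nlinarith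
    positivity
  rw [one_sub_div (by linarith), inv_div, hsub]

/-- Theorem 3.8 (product formula for `π_{p,q}`): the infinite product
`∏_{n≥1} (1 - 1/(pn(qn+1-q/p)))⁻¹` converges to `π_{p,q}/2`; equivalently the partial
products `∏_{n=1}^N pn(qn+1-q/p)/((pn-1)(qn+1))` converge to `π_{p,q}/2`. -/
theorem stmt_16 (p q : ℝ) (hp : 1 < p) (hq : 1 < q) :
    Tendsto
      (fun N : ℕ => ∏ n ∈ Finset.Icc 1 N,
        (1 - 1 / (p * (n : ℝ) * (q * (n : ℝ) + 1 - q / p)))⁻¹)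
      atTop (nhds (gPi p q / 2)) ∧
    Tendsto
      (fun N : ℕ => ∏ n ∈ Finset.Icc 1 N,
        (p * (n : ℝ) * (q * (n : ℝ) + 1 - q / p)) /
          ((p * (n : ℝ) - 1) * (q * (n : ℝ) + 1)))
      atTop (nhds (gPi p q / 2)) := by
  have hq0 : 0 < q := zero_lt_one.trans hq
  have hlim := tendsto_prod_Icc_betaFactor (inv_pos.2 hq0) (sub_pos.2 (inv_lt_one_of_one_lt₀ hp))
  rw [← gPi_div_two_eq_beta hp hq0] at hlim
  have hfactors := hlim.congr fun N => Finset.prod_congr rfl fun (n : ℕ) _ =>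
    betaFactor_inv_one_sub_inv (zero_lt_one.trans hp).ne' hq0.ne' n
  refine ⟨hfactors.congr fun N => Finset.prod_congr rfl fun n hn => ?_, hfactors⟩
  exact (inv_one_sub_one_div_eq hp hq0 (Nat.one_le_cast.2 (Finset.mem_Icc.1 hn).1)).symm
end

section
/- Let p, q ∈ (1,∞) and x ∈ [0,1]. Then cos_{p,q}(π_{p,q}·x/2) = sin_{q*,p*}^{p*−1}(π_{q*,p*}·(1−x)/2) and sin_{p,q}(π_{p,q}·x/2) = cos_{q*,p*}^{q*−1}(π_{q*,p*}·(1−x)/2), where p* = p/(p−1) and q* = q/(q−1). -/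
open Set MeasureTheory Filter

/-! The substitution `t = (1 - s ^ q) ^ (1/p*)` turns `(1 - t ^ p*) ^ (-1/q*) dt` into
`-(q/p*) (1 - s ^ q) ^ (-1/p) ds`, so that
`arcsin_{q*,p*} ((1 - y ^ q) ^ (1/p*)) = (q/p*) (arcsin_{p,q} 1 - arcsin_{p,q} y)`
(checked by differentiating in `y`), and in particular `π_{q*,p*} = (q/p*) π_{p,q}`.
By the inverse function rule `cos_{p,q} (arcsin_{p,q} y) = (1 - y ^ q) ^ (1/p)`, also at `y = 1`,
where the slope of `sin_{p,q}` is squeezed to `0` because the integrand blows up.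
Writing `y = sin_{p,q} (π_{p,q} x / 2)`, both identities become identities between powers of `y`
and `1 - y ^ q`. -/

open Topology

variable {p q y : ℝ}

lemma one_sub_rpow_mem_Icc (hq : 0 ≤ q) (hy : y ∈ Icc (0:ℝ) 1) : 1 - y ^ q ∈ Icc (0:ℝ) 1 :=
  ⟨sub_nonneg.2 (Real.rpow_le_one hy.1 hy.2 hq), sub_le_self _ (Real.rpow_nonneg hy.1 q)⟩

lemma one_sub_rpow_pos (hq : 0 < q) (h0 : 0 ≤ y) (h1 : y < 1) : 0 < 1 - y ^ q :=
  sub_pos.2 (Real.rpow_lt_one h0 h1 hq)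

lemma one_sub_rpow_rpow_mem_Icc {r : ℝ} (hq : 0 ≤ q) (hr : 0 ≤ r) (hy : y ∈ Icc (0:ℝ) 1) :
    (1 - y ^ q) ^ r ∈ Icc (0:ℝ) 1 :=
  have hbase := one_sub_rpow_mem_Icc hq hy
  ⟨Real.rpow_nonneg hbase.1 r, Real.rpow_le_one hbase.1 hbase.2 hr⟩

lemma continuousAt_one_sub_rpow_rpow (hq : 0 < q) (h0 : 0 ≤ y) (h1 : y < 1) (r : ℝ) :
    ContinuousAt (fun t : ℝ => (1 - t ^ q) ^ r) y :=
  (continuousAt_const.sub (Real.continuousAt_rpow_const y q (Or.inr hq.le))).rpow_const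
    (Or.inl (one_sub_rpow_pos hq h0 h1).ne')

lemma intervalIntegrable_gArcsin_integrand (hp : 1 < p) (hq : 1 ≤ q) :
    IntervalIntegrable (fun t : ℝ => (1 - t ^ q) ^ (-(1 / p))) volume 0 1 := by
  have hexp : -1 < -(1 / p) := by
    rw [neg_lt_neg_iff, div_lt_one (by linarith)]; exact hp
  have hdom : IntervalIntegrable (fun t : ℝ => (1 - t) ^ (-(1 / p))) volume 0 1 := by
    simpa using ((intervalIntegral.intervalIntegrable_rpow' (a := 0) (b := 1) hexp).comp_sub_left
      1).symm
  refine hdom.mono_fun (by fun_prop : Measurable _).aestronglyMeasurable ?_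
  filter_upwards [ae_restrict_mem measurableSet_uIoc] with t ht
  rw [uIoc_of_le zero_le_one] at ht
  rw [Real.norm_of_nonneg (Real.rpow_nonneg (one_sub_rpow_mem_Icc (by linarith)
    ⟨ht.1.le, ht.2⟩).1 _), Real.norm_of_nonneg (Real.rpow_nonneg (by linarith [ht.2]) _)]
  rcases ht.2.lt_or_eq with ht1 | rfl
  · have htq : t ^ q ≤ t := by
      simpa using Real.rpow_le_rpow_of_exponent_ge ht.1 ht.2 hq
    exact Real.rpow_le_rpow_of_nonpos (by linarith) (by linarith)
      (neg_nonpos.2 (by positivity))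
  · -- both sides are the junk value `0 ^ (-(1 / p)) = 0`
    simp

lemma gArcsin_zero : gArcsin p q 0 = 0 := by simp [gArcsin]

lemma gPi_div_two : gPi p q / 2 = gArcsin p q 1 := by rw [gPi]; ring

lemma gArcsin_hasDerivAt (hq : 0 < q) (h0 : 0 ≤ y) (h1 : y < 1) :
    HasDerivAt (gArcsin p q) ((1 - y ^ q) ^ (-(1 / p))) y := by
  refine intervalIntegral.integral_hasDerivAt_right ?_
    (by fun_prop : Measurable _).aestronglyMeasurable.stronglyMeasurableAtFilter
    (continuousAt_one_sub_rpow_rpow hq h0 h1 _)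
  refine ContinuousOn.intervalIntegrable fun t ht => ?_
  rw [uIcc_of_le h0] at ht
  exact (continuousAt_one_sub_rpow_rpow hq ht.1 (ht.2.trans_lt h1) _).continuousWithinAt

lemma gArcsin_continuousOn (hp : 1 < p) (hq : 1 ≤ q) : ContinuousOn (gArcsin p q) (Icc 0 1) := by
  have := intervalIntegral.continuousOn_primitive_interval'
    (intervalIntegrable_gArcsin_integrand hp hq) left_mem_uIcc
  rwa [uIcc_of_le zero_le_one] at this

lemma gArcsin_strictMonoOn (hp : 1 < p) (hq : 1 ≤ q) : StrictMonoOn (gArcsin p q) (Icc 0 1) := by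
  refine strictMonoOn_of_deriv_pos (convex_Icc 0 1) (gArcsin_continuousOn hp hq) fun y hy => ?_
  rw [interior_Icc] at hy
  rw [(gArcsin_hasDerivAt (p := p) (by linarith) hy.1.le hy.2).deriv]
  exact Real.rpow_pos_of_pos (one_sub_rpow_pos (by linarith) hy.1.le hy.2) _

lemma gPi_pos (hp : 1 < p) (hq : 1 ≤ q) : 0 < gPi p q := by
  have := gArcsin_strictMonoOn hp hq (left_mem_Icc.2 zero_le_one) (right_mem_Icc.2 zero_le_one)
    zero_lt_one
  rw [gArcsin_zero] at this
  rw [gPi]; positivity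

lemma exists_gArcsin_eq (hp : 1 < p) (hq : 1 ≤ q) {t : ℝ} (ht : t ∈ Icc 0 (gPi p q / 2)) :
    ∃ y ∈ Icc (0:ℝ) 1, gArcsin p q y = t := by
  rw [gPi_div_two] at ht
  have := intermediate_value_Icc zero_le_one (gArcsin_continuousOn hp hq)
  rw [gArcsin_zero] at this
  exact this ht

lemma mul_le_gArcsin_one_sub (hp : 1 < p) (hq : 1 ≤ q) (h0 : 0 ≤ y) (h1 : y < 1) :
    (1 - y) * (1 - y ^ q) ^ (-(1 / p)) ≤ gArcsin p q 1 - gArcsin p q y := by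
  obtain ⟨ξ, hξ, hslope⟩ := exists_hasDerivAt_eq_slope (gArcsin p q)
    (fun t => (1 - t ^ q) ^ (-(1 / p))) h1
    ((gArcsin_continuousOn hp hq).mono (Icc_subset_Icc h0 le_rfl))
    fun t ht => gArcsin_hasDerivAt (by linarith) (h0.trans ht.1.le) ht.2
  have hmono : (1 - y ^ q) ^ (-(1 / p)) ≤ (1 - ξ ^ q) ^ (-(1 / p)) :=
    Real.rpow_le_rpow_of_nonpos (one_sub_rpow_pos (by linarith) (h0.trans hξ.1.le) hξ.2)
      (by gcongr; exact hξ.1.le) (neg_nonpos.2 (by positivity))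
  rw [hslope, le_div_iff₀ (by linarith)] at hmono
  linarith

lemma gArcsin_mem_Icc (hp : 1 < p) (hq : 1 ≤ q) (hy : y ∈ Icc (0:ℝ) 1) :
    gArcsin p q y ∈ Icc 0 (gPi p q / 2) := by
  have hmono := (gArcsin_strictMonoOn hp hq).monotoneOn
  rw [gPi_div_two, ← gArcsin_zero (p := p) (q := q)]
  exact ⟨hmono (left_mem_Icc.2 zero_le_one) hy hy.1, hmono hy (right_mem_Icc.2 zero_le_one) hy.2⟩

lemma IsGSin.gArcsin_apply {S : ℝ → ℝ} (hp : 1 < p) (hq : 1 ≤ q) (hS : IsGSin p q S) {t : ℝ}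
    (ht : t ∈ Icc 0 (gPi p q / 2)) : gArcsin p q (S t) = t := by
  obtain ⟨y, hy, rfl⟩ := exists_gArcsin_eq hp hq ht
  rw [hS y hy]

lemma HasDerivWithinAt.mul_eq_one_of_leftInvOn {f g : ℝ → ℝ} {s : Set ℝ} {x f' g' : ℝ}
    (hg : HasDerivWithinAt g g' s x) (hf : HasDerivAt f f' (g x)) (hfg : LeftInvOn f g s)
    (hx : x ∈ s) (hs : UniqueDiffWithinAt ℝ s x) : f' * g' = 1 :=
  hs.eq_deriv s ((hf.comp_hasDerivWithinAt x hg).congr_of_mem (fun _ hu => (hfg hu).symm) hx)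
    (hasDerivWithinAt_id x s)

lemma IsGCos.apply_gArcsin_of_lt_one {S C : ℝ → ℝ} (hp : 1 < p) (hq : 1 ≤ q)
    (hS : IsGSin p q S) (hC : IsGCos p q S C) (h0 : 0 ≤ y) (h1 : y < 1) :
    C (gArcsin p q y) = (1 - y ^ q) ^ (1 / p) := by
  have ht := gArcsin_mem_Icc hp hq ⟨h0, h1.le⟩
  have hderiv : HasDerivAt (gArcsin p q) ((1 - y ^ q) ^ (-(1 / p))) (S (gArcsin p q y)) := by
    rw [hS y ⟨h0, h1.le⟩]; exact gArcsin_hasDerivAt (by linarith) h0 h1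
  have hinv := (hC _ ht).mul_eq_one_of_leftInvOn hderiv (fun t ht => hS.gArcsin_apply hp hq ht) ht
    (uniqueDiffOn_Icc (half_pos (gPi_pos hp hq)) _ ht)
  rwa [Real.rpow_neg (one_sub_rpow_mem_Icc (by linarith) ⟨h0, h1.le⟩).1,
    inv_mul_eq_one₀ (Real.rpow_pos_of_pos (one_sub_rpow_pos (by linarith) h0 h1) _).ne',
    eq_comm] at hinv

lemma IsGSin.slope_mem_Icc {S : ℝ → ℝ} (hp : 1 < p) (hq : 1 ≤ q) (hS : IsGSin p q S) {t : ℝ}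
    (ht : t ∈ Ico 0 (gPi p q / 2)) :
    slope S (gPi p q / 2) t ∈ Icc 0 ((1 - S t ^ q) ^ (1 / p)) := by
  obtain ⟨y, hy, rfl⟩ := exists_gArcsin_eq hp hq (Ico_subset_Icc_self ht)
  have hy1 : y < 1 := by
    refine hy.2.lt_of_ne fun h => ht.2.ne ?_
    rw [h, gPi_div_two]
  have hgap : 0 < gArcsin p q 1 - gArcsin p q y :=
    sub_pos.2 (gArcsin_strictMonoOn hp hq hy (right_mem_Icc.2 zero_le_one) hy1)
  have hbase := one_sub_rpow_pos (by linarith) hy.1 hy1 (q := q)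
  have hbound := mul_le_gArcsin_one_sub hp hq hy.1 hy1
  rw [Real.rpow_neg hbase.le, ← div_eq_mul_inv,
    div_le_iff₀ (Real.rpow_pos_of_pos hbase _)] at hbound
  rw [slope_def_field, gPi_div_two, hS y hy, hS 1 (right_mem_Icc.2 zero_le_one),
    show y - 1 = -(1 - y) by ring, show gArcsin p q y - gArcsin p q 1
      = -(gArcsin p q 1 - gArcsin p q y) by ring, neg_div_neg_eq]
  exact ⟨div_nonneg (by linarith [hy.2]) hgap.le, (div_le_iff₀ hgap).2 (by linarith)⟩

lemma IsGCos.apply_gPi_div_two {S C : ℝ → ℝ} (hp : 1 < p) (hq : 1 ≤ q)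
    (hS : IsGSin p q S) (hC : IsGCos p q S C) : C (gPi p q / 2) = 0 := by
  set b := gPi p q / 2
  have hb : b ∈ Icc 0 b := right_mem_Icc.2 (half_pos (gPi_pos hp hq)).le
  have hSb : S b = 1 := by
    show S (gPi p q / 2) = 1
    rw [gPi_div_two]; exact hS 1 (right_mem_Icc.2 zero_le_one)
  have hlim : Tendsto (fun t => (1 - S t ^ q) ^ (1 / p)) (𝓝[Icc 0 b \ {b}] b) (𝓝 0) := by
    have hcont : ContinuousAt (fun u : ℝ => (1 - u ^ q) ^ (1 / p)) (S b) :=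
      (continuousAt_const.sub (Real.continuousAt_rpow_const _ q (Or.inr (by linarith)))).rpow_const
        (Or.inr (by positivity))
    have : Tendsto (fun t => (1 - S t ^ q) ^ (1 / p)) (𝓝[Icc 0 b \ {b}] b)
        (𝓝 ((1 - S b ^ q) ^ (1 / p))) := hcont.tendsto.comp
      ((hC b hb).continuousWithinAt.tendsto.mono_left (nhdsWithin_mono b sdiff_subset))
    rwa [hSb, Real.one_rpow, sub_self, Real.zero_rpow (one_div_pos.2 (zero_lt_one.trans hp)).ne']
      at this
  have hzero : HasDerivWithinAt S 0 (Icc 0 b) b := by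
    have hslope : ∀ᶠ t in 𝓝[Icc 0 b \ {b}] b, slope S b t ∈ Icc 0 ((1 - S t ^ q) ^ (1 / p)) := by
      filter_upwards [self_mem_nhdsWithin] with t ht
      exact hS.slope_mem_Icc hp hq ⟨ht.1.1, ht.1.2.lt_of_ne ht.2⟩
    rw [hasDerivWithinAt_iff_tendsto_slope]
    exact tendsto_of_tendsto_of_tendsto_of_le_of_le' tendsto_const_nhds hlim
      (hslope.mono fun _ h => h.1) (hslope.mono fun _ h => h.2)
  exact (uniqueDiffOn_Icc (half_pos (gPi_pos hp hq)) b hb).eq_deriv _ (hC b hb) hzero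

lemma IsGCos.apply_gArcsin {S C : ℝ → ℝ} (hp : 1 < p) (hq : 1 ≤ q)
    (hS : IsGSin p q S) (hC : IsGCos p q S C) (hy : y ∈ Icc (0:ℝ) 1) :
    C (gArcsin p q y) = (1 - y ^ q) ^ (1 / p) := by
  rcases hy.2.lt_or_eq with hy1 | rfl
  · exact hC.apply_gArcsin_of_lt_one hp hq hS hy.1 hy1
  · rw [← gPi_div_two, hC.apply_gPi_div_two hp hq hS, Real.one_rpow, sub_self,
      Real.zero_rpow (one_div_pos.2 (zero_lt_one.trans hp)).ne']

section Duality

variable {p' q' : ℝ} (hp : p.HolderConjugate p') (hq : q.HolderConjugate q')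
include hp hq

lemma hasDerivAt_gArcsin_dual (h0 : 0 < y) (h1 : y < 1) :
    HasDerivAt (fun u => gArcsin q' p' ((1 - u ^ q) ^ (1 / p')))
      (-(q / p') * (1 - y ^ q) ^ (-(1 / p))) y := by
  have hbase := one_sub_rpow_pos hq.pos h0.le h1
  have hσ : HasDerivAt (fun u => (1 - u ^ q) ^ (1 / p'))
      (-(q * y ^ (q - 1)) * (1 / p') * (1 - y ^ q) ^ (1 / p' - 1)) y :=
    ((Real.hasDerivAt_rpow_const (Or.inl h0.ne')).const_sub 1).rpow_const (Or.inl hbase.ne')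
  have hσ_pow : ((1 - y ^ q) ^ (1 / p')) ^ p' = 1 - y ^ q := by
    rw [one_div, Real.rpow_inv_rpow hbase.le hp.symm.ne_zero]
  have hF := gArcsin_hasDerivAt (p := q') (y := (1 - y ^ q) ^ (1 / p')) hp.symm.pos
    (Real.rpow_nonneg hbase.le _) (Real.rpow_lt_one hbase.le
      (by linarith [Real.rpow_pos_of_pos h0 q]) (one_div_pos.2 hp.symm.pos))
  refine (hF.comp y hσ).congr_deriv ?_
  rw [hσ_pow, sub_sub_cancel, ← Real.rpow_mul h0.le, mul_neg, mul_one_div,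
    hq.div_conj_eq_sub_one, one_div, one_div, hp.symm.inv_sub_one, Real.rpow_neg h0.le]
  have := Real.rpow_pos_of_pos h0 (q - 1)
  field_simp

lemma gArcsin_dual (hy : y ∈ Icc (0:ℝ) 1) :
    gArcsin q' p' ((1 - y ^ q) ^ (1 / p')) = q / p' * (gArcsin p q 1 - gArcsin p q y) := by
  rcases hy.2.lt_or_eq with hy1 | rfl
  swap
  · rw [Real.one_rpow, sub_self, Real.zero_rpow (one_div_pos.2 hp.symm.pos).ne', gArcsin_zero,
      sub_self, mul_zero]
  set H := fun u => gArcsin q' p' ((1 - u ^ q) ^ (1 / p')) + q / p' * gArcsin p q u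
  have hHcont : ContinuousOn H (Icc y 1) := by
    refine .add ((gArcsin_continuousOn hq.symm.lt hp.symm.lt.le).comp ?_ ?_)
      (continuousOn_const.mul ((gArcsin_continuousOn hp.lt hq.lt.le).mono
        (Icc_subset_Icc hy.1 le_rfl)))
    · exact (continuous_const.sub (Real.continuous_rpow_const hq.pos.le)).continuousOn.rpow_const
        fun _ _ => Or.inr (one_div_pos.2 hp.symm.pos).le
    · exact fun u hu => one_sub_rpow_rpow_mem_Icc hq.pos.le (one_div_pos.2 hp.symm.pos).le
        (Icc_subset_Icc hy.1 le_rfl hu)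
  have hHderiv : ∀ u ∈ Ioo y 1, HasDerivAt H 0 u := fun u hu => by
    have hu0 : 0 < u := hy.1.trans_lt hu.1
    exact ((hasDerivAt_gArcsin_dual hp hq hu0 hu.2).add
      ((gArcsin_hasDerivAt (p := p) hq.pos hu0.le hu.2).const_mul (q / p'))).congr_deriv (by ring)
  obtain ⟨_, _, hslope⟩ := exists_hasDerivAt_eq_slope H (fun _ => 0) hy1 hHcont hHderiv
  have hH : H y = H 1 := by
    rw [eq_comm, ← sub_eq_zero]
    exact (div_eq_zero_iff.1 hslope.symm).resolve_right (by linarith)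
  simp only [H, Real.one_rpow, sub_self, Real.zero_rpow (one_div_pos.2 hp.symm.pos).ne',
    gArcsin_zero, zero_add] at hH
  linarith

lemma gPi_dual : gPi q' p' = q / p' * gPi p q := by
  have := gArcsin_dual hp hq (left_mem_Icc.2 zero_le_one)
  rw [Real.zero_rpow hq.pos.ne', sub_zero, Real.one_rpow, gArcsin_zero, sub_zero] at this
  rw [gPi, gPi, this]; ring

theorem IsGCos.duality {S C S' C' : ℝ → ℝ} (hS : IsGSin p q S) (hC : IsGCos p q S C)
    (hS' : IsGSin q' p' S') (hC' : IsGCos q' p' S' C') {x : ℝ} (hx : x ∈ Icc (0:ℝ) 1) :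
    C (gPi p q * x / 2) = S' (gPi q' p' * (1 - x) / 2) ^ (p' - 1) ∧
      S (gPi p q * x / 2) = C' (gPi q' p' * (1 - x) / 2) ^ (q' - 1) := by
  have hπ := gPi_pos hp.lt hq.lt.le
  obtain ⟨y, hy, hyt⟩ := exists_gArcsin_eq hp.lt hq.lt.le (t := gPi p q * x / 2)
    ⟨by have := hx.1; positivity, by have := hx.2; nlinarith⟩
  have hbase := one_sub_rpow_mem_Icc hq.pos.le hy
  have hs_pow : ((1 - y ^ q) ^ (1 / p')) ^ p' = 1 - y ^ q := by
    rw [one_div, Real.rpow_inv_rpow hbase.1 hp.symm.ne_zero]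
  have hs := one_sub_rpow_rpow_mem_Icc hq.pos.le (one_div_pos.2 hp.symm.pos).le hy
  set s := (1 - y ^ q) ^ (1 / p')
  have hs_arg : gArcsin q' p' s = gPi q' p' * (1 - x) / 2 := by
    rw [gArcsin_dual hp hq hy, gPi_dual hp hq, ← gPi_div_two, hyt]; ring
  have hp_exp : 1 / p' * (p' - 1) = 1 / p := by
    field_simp [hp.ne_zero, hp.symm.ne_zero]; linarith [hp.mul_eq_add]
  have hq_exp : q * (1 / q') * (q' - 1) = 1 := by
    field_simp [hq.symm.ne_zero]; linarith [hq.mul_eq_add]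
  rw [← hyt, ← hs_arg, hS y hy, hS' s hs, hC.apply_gArcsin hp.lt hq.lt.le hS hy,
    hC'.apply_gArcsin hq.symm.lt hp.symm.lt.le hS' hs, hs_pow, sub_sub_cancel,
    ← Real.rpow_mul hbase.1, ← Real.rpow_mul hy.1, ← Real.rpow_mul hy.1, hp_exp, hq_exp,
    Real.rpow_one]
  exact ⟨rfl, rfl⟩

end Duality

/-- Appendix formulas (Proposition 3.2 of [EGL2012]): for `x ∈ [0,1]`,
`cos_{p,q}(π_{p,q} x/2) = sin_{q*,p*}^{p*-1}(π_{q*,p*}(1-x)/2)` and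
`sin_{p,q}(π_{p,q} x/2) = cos_{q*,p*}^{q*-1}(π_{q*,p*}(1-x)/2)`. -/
theorem stmt_18 (p q : ℝ) (hp : 1 < p) (hq : 1 < q)
    (S C : ℝ → ℝ) (hS : IsGSin p q S) (hC : IsGCos p q S C)
    (S' C' : ℝ → ℝ)
    (hS' : IsGSin (q / (q - 1)) (p / (p - 1)) S')
    (hC' : IsGCos (q / (q - 1)) (p / (p - 1)) S' C')
    (x : ℝ) (hx : x ∈ Icc (0:ℝ) 1) :
    C (gPi p q * x / 2) =
      S' (gPi (q / (q - 1)) (p / (p - 1)) * (1 - x) / 2) ^ (p / (p - 1) - 1) ∧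
    S (gPi p q * x / 2) =
      C' (gPi (q / (q - 1)) (p / (p - 1)) * (1 - x) / 2) ^ (q / (q - 1) - 1) :=
  IsGCos.duality ((Real.holderConjugate_iff_eq_conjExponent hp).2 rfl)
    ((Real.holderConjugate_iff_eq_conjExponent hq).2 rfl) hS hC hS' hC' hx
end
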